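/- arXiv:2504.10264 — 5 statements merged into one kernel-verified Lean document; each statement's English description precedes it below -/
import Mathlib

section
/- Positive frequency of hyperbolic times (finite form): Let X be a set, f : X → X a map, φ : X → ℝ a function with φ(z) ≥ −L̄ for all z ∈ X, and c > 0 with L̄ ≥ c. If x ∈ X and n ≥ 1 satisfy S_nφ(x) ≤ −c·n, then there exist an integer ℓ ≥ θ·n and integers 1 ≤ n₁ < ⋯ < n_ℓ ≤ n such that each n_i is a σ-hyperbolic time for x, where σ = e^{−7c/8} and θ = c/(8L̄ − 7c). -/
/-- `n ≥ 1` is a `σ`-hyperbolic time for `x` (w.r.t. `f` and `φ`) if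
`S_kφ(f^{n−k}(x)) ≤ k log σ` for every `1 ≤ k ≤ n`, where `S_kφ` is the Birkhoff sum. -/
def IsHyperbolicTime {X : Type*} (f : X → X) (φ : X → ℝ) (σ : ℝ) (x : X) (n : ℕ) : Prop :=
  1 ≤ n ∧ ∀ k, 1 ≤ k → k ≤ n →
    birkhoffSum f φ k (f^[n - k] x) ≤ (k : ℝ) * Real.log σ

/-- **Positive frequency of hyperbolic times (finite form).** If `φ ≥ −L̄`, `L̄ ≥ c > 0`
and `S_nφ(x) ≤ −c n`, then there are at least `θ n` many `σ`-hyperbolic times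
`1 ≤ n₁ < ⋯ < n_ℓ ≤ n` for `x`, where `σ = e^{−7c/8}` and `θ = c/(8L̄ − 7c)`. -/
theorem positive_frequency_of_hyperbolic_times
    {X : Type*} (f : X → X) (φ : X → ℝ) (L : ℝ)
    (hφ : ∀ z, -L ≤ φ z) (c : ℝ) (hc : 0 < c) (hcL : c ≤ L)
    (x : X) (n : ℕ) (hn : 1 ≤ n)
    (hsum : birkhoffSum f φ n x ≤ -c * n) :
    ∃ (ℓ : ℕ) (t : Fin ℓ → ℕ),
      c / (8 * L - 7 * c) * n ≤ ℓ ∧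
      StrictMono t ∧
      (∀ i, 1 ≤ t i ∧ t i ≤ n) ∧
      (∀ i, IsHyperbolicTime f φ (Real.exp (-(7 * c / 8))) x (t i)) := by
  classical
  set c₁ : ℝ := 7 * c / 8 with hc₁def
  have hc₁pos : 0 < c₁ := by positivity
  have hgap : 0 < L - c₁ := by
    have : c₁ < c := by rw [hc₁def]; linarith
    linarith
  -- the Pliss auxiliary sequence
  set s : ℕ → ℝ := fun j => -(birkhoffSum f φ j x) - c₁ * j with hs
  have hstep : ∀ j : ℕ, s (j + 1) = s j + (-(φ (f^[j] x)) - c₁) := by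
    intro j
    simp only [hs, birkhoffSum_succ, Nat.cast_add, Nat.cast_one]
    ring
  -- the set of records ("hyperbolic times")
  set P : ℕ → Prop := fun j => ∀ m < j, s m ≤ s j with hP
  set R : Finset ℕ := (Finset.Icc 1 n).filter P with hR
  set ℓ : ℕ := R.card with hℓ
  -- key bound: s j ≤ (number of records ≤ j) * (L - c₁)
  have key : ∀ j, j ≤ n → s j ≤ ((Finset.Icc 1 j).filter P).card * (L - c₁) := by
    intro j
    induction j using Nat.strong_induction_on with
    | _ j ih =>
      intro hjn
      rcases Nat.eq_zero_or_pos j with rfl | hj1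
      · simp [hs]
      obtain ⟨j', rfl⟩ : ∃ j', j = j' + 1 := ⟨j - 1, by omega⟩
      by_cases hrec : P (j' + 1)
      · have hcard : ((Finset.Icc 1 (j' + 1)).filter P).card
            = ((Finset.Icc 1 j').filter P).card + 1 := by
          have : (Finset.Icc 1 (j' + 1)).filter P
              = insert (j' + 1) ((Finset.Icc 1 j').filter P) := by
            ext a
            simp only [Finset.mem_filter, Finset.mem_Icc, Finset.mem_insert]
            constructor
            · rintro ⟨⟨h1, h2⟩, hp⟩
              rcases Nat.lt_or_ge a (j' + 1) with h | h
              · exact Or.inr ⟨⟨h1, by omega⟩, hp⟩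
              · exact Or.inl (by omega)
            · rintro (rfl | ⟨⟨h1, h2⟩, hp⟩)
              · exact ⟨⟨by omega, le_refl _⟩, hrec⟩
              · exact ⟨⟨h1, by omega⟩, hp⟩
          rw [this, Finset.card_insert_of_notMem]
          simp only [Finset.mem_filter, Finset.mem_Icc]
          rintro ⟨⟨_, h⟩, _⟩; omega
        have h1 : s j' ≤ ((Finset.Icc 1 j').filter P).card * (L - c₁) :=
          ih j' (by omega) (by omega)
        have h2 : -(φ (f^[j'] x)) - c₁ ≤ L - c₁ := by
          have := hφ (f^[j'] x); linarith
        rw [hstep, hcard]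
        push_cast
        linarith
      · -- not a record: there is m < j'+1 with s m > s (j'+1)
        simp only [hP, not_forall, not_le] at hrec
        obtain ⟨m, hm, hsm⟩ := hrec
        have h1 : s m ≤ ((Finset.Icc 1 m).filter P).card * (L - c₁) :=
          ih m (by omega) (by omega)
        have hsub : ((Finset.Icc 1 m).filter P).card ≤ ((Finset.Icc 1 (j' + 1)).filter P).card := by
          apply Finset.card_le_card
          apply Finset.filter_subset_filter
          apply Finset.Icc_subset_Icc_right; omega
        have : ((Finset.Icc 1 m).filter P).card * (L - c₁)
            ≤ ((Finset.Icc 1 (j' + 1)).filter P).card * (L - c₁) := by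
          apply mul_le_mul_of_nonneg_right _ hgap.le
          exact_mod_cast hsub
        linarith
  -- lower bound on s n
  have hsn : (c / 8) * n ≤ s n := by
    simp only [hs]
    have : (c / 8) * n = -(-c * n) - c₁ * n := by rw [hc₁def]; ring
    rw [this]
    have := hsum
    linarith
  have hℓbound : (c / 8) * n ≤ (ℓ : ℝ) * (L - c₁) := le_trans hsn (key n le_rfl)
  -- construct the embedding
  refine ⟨ℓ, R.orderEmbOfFin rfl, ?_, (R.orderEmbOfFin rfl).strictMono, ?_, ?_⟩
  · -- counting bound
    have h8 : 0 < 8 * L - 7 * c := by linarith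
    rw [div_mul_eq_mul_div, div_le_iff₀ h8]
    have : (8 : ℝ) * L - 7 * c = 8 * (L - c₁) := by rw [hc₁def]; ring
    rw [this]
    calc c * n = 8 * ((c / 8) * n) := by ring
    _ ≤ 8 * ((ℓ : ℝ) * (L - c₁)) := by linarith
    _ = (ℓ : ℝ) * (8 * (L - c₁)) := by ring
  · intro i
    have hmem := R.orderEmbOfFin_mem rfl i
    simp only [hR, Finset.mem_filter, Finset.mem_Icc] at hmem
    exact hmem.1
  · intro i
    have hmem := R.orderEmbOfFin_mem rfl i
    simp only [hR, Finset.mem_filter, Finset.mem_Icc] at hmem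
    obtain ⟨⟨h1, h2⟩, hp⟩ := hmem
    set j := R.orderEmbOfFin rfl i
    refine ⟨h1, fun k hk1 hkj => ?_⟩
    have hrec := hp (j - k) (by omega)
    -- s (j-k) ≤ s j means birkhoffSum f φ k (f^[j-k] x) ≤ -c₁ k
    have hdecomp : birkhoffSum f φ j x
        = birkhoffSum f φ (j - k) x + birkhoffSum f φ k (f^[j - k] x) := by
      have : j = (j - k) + k := by omega
      conv_lhs => rw [this]
      exact birkhoffSum_add f φ (j - k) k x
    have hcast : ((j : ℝ) - (j - k : ℕ)) = (k : ℝ) := by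
      have : (j - k : ℕ) = j - k := rfl
      push_cast [Nat.cast_sub hkj]
      ring
    rw [Real.log_exp]
    simp only [hs] at hrec
    have : birkhoffSum f φ k (f^[j - k] x) ≤ c₁ * ((j - k : ℕ) : ℝ) - c₁ * j := by
      linarith [hdecomp ▸ hrec]
    calc birkhoffSum f φ k (f^[j - k] x) ≤ c₁ * ((j - k : ℕ) : ℝ) - c₁ * j := this
    _ = (k : ℝ) * (-(7 * c / 8)) := by
        rw [hc₁def, Nat.cast_sub hkj]; ring
end

section
/- Positive upper density of hyperbolic times (asymptotic form): Let X be a set, f : X → X a map, φ : X → ℝ a function with φ(z) ≥ −L̄ for all z ∈ X, and c > 0 with L̄ ≥ c. If x ∈ X satisfies limsup_{n→∞} S_nφ(x)/n < −c, then the set H of σ-hyperbolic times of x, with σ = e^{−7c/8}, has upper density d⁺(H) ≥ c/(8L̄ − 7c); in particular H is infinite. -/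
open scoped Classical

namespace PlissAux

variable {X : Type*} (f : X → X) (φ : X → ℝ) (c : ℝ) (x : X)

/-- Auxiliary "deficit" function: `T n = −S_nφ(x) − (7c/8) n`. -/
noncomputable def T (n : ℕ) : ℝ := -(birkhoffSum f φ n x) - 7 * c / 8 * n

lemma T_zero : T f φ c x 0 = 0 := by simp [T]

lemma T_succ (n : ℕ) : T f φ c x (n + 1) = T f φ c x n + (-(φ (f^[n] x)) - 7 * c / 8) := by
  simp only [T, birkhoffSum_succ]
  push_cast
  ring

lemma hyp_iff (n : ℕ) :
    IsHyperbolicTime f φ (Real.exp (-(7 * c / 8))) x n ↔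
      (1 ≤ n ∧ ∀ m, m < n → T f φ c x m ≤ T f φ c x n) := by
  unfold IsHyperbolicTime
  rw [Real.log_exp]
  constructor
  · rintro ⟨h1, h2⟩
    refine ⟨h1, fun m hm => ?_⟩
    have hk := h2 (n - m) (by omega) (by omega)
    rw [show n - (n - m) = m by omega] at hk
    have hadd := birkhoffSum_add f φ m (n - m) x
    rw [show m + (n - m) = n by omega] at hadd
    have hcast : ((n - m : ℕ) : ℝ) = (n : ℝ) - m := by
      push_cast [Nat.cast_sub hm.le]
      ring
    rw [hcast] at hk
    simp only [T]
    nlinarith [hk, hadd]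
  · rintro ⟨h1, h2⟩
    refine ⟨h1, fun k hk1 hkn => ?_⟩
    have hm := h2 (n - k) (by omega)
    have hadd := birkhoffSum_add f φ (n - k) k x
    rw [show n - k + k = n by omega] at hadd
    have hcast : ((n - k : ℕ) : ℝ) = (n : ℝ) - k := by
      push_cast [Nat.cast_sub hkn]
      ring
    simp only [T] at hm
    rw [hcast] at hm
    nlinarith [hm, hadd]

end PlissAux

/-- **Positive upper density of hyperbolic times (asymptotic form).** If `φ ≥ −L̄`,
`L̄ ≥ c > 0` and `limsup_n S_nφ(x)/n < −c`, then the set `H` of `e^{−7c/8}`-hyperbolic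
times of `x` has upper density `d⁺(H) ≥ c/(8L̄ − 7c)`; in particular `H` is infinite. -/
theorem positive_upper_density_of_hyperbolic_times
    {X : Type*} (f : X → X) (φ : X → ℝ) (L : ℝ)
    (hφ : ∀ z, -L ≤ φ z) (c : ℝ) (hc : 0 < c) (hcL : c ≤ L)
    (x : X)
    (hsum : Filter.limsup (fun n : ℕ => birkhoffSum f φ n x / n) Filter.atTop < -c) :
    c / (8 * L - 7 * c) ≤
      Filter.limsup (fun n : ℕ =>
        (((Finset.Icc 1 n).filter
            (fun m => IsHyperbolicTime f φ (Real.exp (-(7 * c / 8))) x m)).card : ℝ) / n)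
        Filter.atTop ∧
    {n : ℕ | IsHyperbolicTime f φ (Real.exp (-(7 * c / 8))) x n}.Infinite := by
  classical
  set T := PlissAux.T f φ c x with hT
  set P : ℕ → Prop := fun m => IsHyperbolicTime f φ (Real.exp (-(7 * c / 8))) x m with hP
  set count : ℕ → ℕ := fun n => ((Finset.Icc 1 n).filter P).card with hcount
  have hA : (0:ℝ) < L - 7 * c / 8 := by linarith
  have hiff : ∀ n, P n ↔ (1 ≤ n ∧ ∀ m, m < n → T m ≤ T n) :=
    fun n => PlissAux.hyp_iff f φ c x n
  have hstep : ∀ n, T (n + 1) ≤ T n + (L - 7 * c / 8) := by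
    intro n
    have h1 := PlissAux.T_succ f φ c x n
    have h2 := hφ (f^[n] x)
    rw [← hT] at h1
    linarith
  have hmono : ∀ n, count n ≤ count (n + 1) := by
    intro n
    apply Finset.card_le_card
    exact Finset.monotone_filter_left P (Finset.Icc_subset_Icc le_rfl (Nat.le_succ n))
  -- key counting estimate
  have key : ∀ n, ∀ m ≤ n, T m ≤ (L - 7 * c / 8) * count n := by
    intro n
    induction n with
    | zero =>
      intro m hm
      interval_cases m
      rw [hT, PlissAux.T_zero]
      have : (0:ℝ) ≤ (count 0 : ℝ) := by positivity
      nlinarith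
    | succ n ih =>
      have hcc : (L - 7 * c / 8) * count n ≤ (L - 7 * c / 8) * count (n + 1) := by
        have := hmono n
        have : (count n : ℝ) ≤ count (n + 1) := by exact_mod_cast this
        nlinarith
      intro m hm
      rcases Nat.eq_or_lt_of_le hm with rfl | hm'
      · by_cases hH : ∀ m', m' < n + 1 → T m' ≤ T (n + 1)
        · have hPn : P (n + 1) := (hiff (n + 1)).mpr ⟨by omega, hH⟩
          have hins : count (n + 1) = count n + 1 := by
            have hIcc : Finset.Icc 1 (n + 1) = insert (n + 1) (Finset.Icc 1 n) := by
              ext m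
              simp only [Finset.mem_Icc, Finset.mem_insert]
              omega
            rw [hcount]
            simp only [hIcc, Finset.filter_insert, if_pos hPn]
            rw [Finset.card_insert_of_notMem]
            intro hmem
            have := Finset.mem_of_mem_filter _ hmem
            simp at this
          have h1 := hstep n
          have h2 := ih n le_rfl
          rw [hins]
          push_cast
          linarith
        · push_neg at hH
          obtain ⟨m', hm', hlt⟩ := hH
          have := ih m' (by omega)
          linarith
      · have := ih m (by omega)
        linarith
  -- eventual estimate from the limsup hypothesis
  have hs : ∃ a < -c, ∀ᶠ (n : ℕ) in Filter.atTop, birkhoffSum f φ n x / n ≤ a := by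
    rw [Filter.limsup_eq] at hsum
    by_cases hne : {a : ℝ | ∀ᶠ (n : ℕ) in Filter.atTop, birkhoffSum f φ n x / n ≤ a}.Nonempty
    · obtain ⟨a, ha, hlt⟩ := exists_lt_of_csInf_lt hne hsum
      exact ⟨a, hlt, ha⟩
    · exfalso
      rw [Set.not_nonempty_iff_eq_empty] at hne
      rw [hne, Real.sInf_empty] at hsum
      linarith
  obtain ⟨a, halt, hev⟩ := hs
  obtain ⟨N, hN⟩ := Filter.eventually_atTop.mp hev
  have hTlow : ∀ n, max N 1 ≤ n → c / 8 * n ≤ T n := by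
    intro n hn
    have h1 : birkhoffSum f φ n x / n ≤ a := hN n (le_trans (le_max_left _ _) hn)
    have hn1 : (1:ℝ) ≤ (n:ℝ) := by exact_mod_cast le_trans (le_max_right _ _) hn
    have hn0 : (0:ℝ) < n := by linarith
    have h2 : birkhoffSum f φ n x ≤ a * n := by
      rw [div_le_iff₀ hn0] at h1; linarith
    have h3 : birkhoffSum f φ n x ≤ -c * n := by nlinarith
    rw [hT]
    simp only [PlissAux.T]
    nlinarith
  -- density lower bound eventually
  have hdens : ∀ᶠ (n : ℕ) in Filter.atTop, c / (8 * L - 7 * c) ≤ (count n : ℝ) / n := by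
    filter_upwards [Filter.eventually_ge_atTop (max N 1)] with n hn
    have h1 := hTlow n hn
    have h2 := key n n le_rfl
    have hn1 : (1:ℝ) ≤ (n:ℝ) := by
      exact_mod_cast le_trans (le_max_right _ _) hn
    have hn0 : (0:ℝ) < n := by linarith
    rw [div_le_div_iff₀ (by linarith) hn0]
    nlinarith
  have hbdd : Filter.IsBoundedUnder (· ≤ ·) Filter.atTop (fun n : ℕ => (count n : ℝ) / n) := by
    refine ⟨1, Filter.eventually_map.mpr (Filter.Eventually.of_forall fun n => ?_)⟩
    rcases Nat.eq_zero_or_pos n with rfl | hn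
    · simp
    · have h1 : count n ≤ n := by
        calc count n ≤ (Finset.Icc 1 n).card := Finset.card_filter_le _ _
        _ = n := by rw [Nat.card_Icc]; omega
      have hn0 : (0:ℝ) < n := by exact_mod_cast hn
      rw [div_le_one hn0]
      exact_mod_cast h1
  constructor
  · exact Filter.le_limsup_of_frequently_le hdens.frequently hbdd
  · intro hfin
    have hub : ∀ n, count n ≤ hfin.toFinset.card := by
      intro n
      apply Finset.card_le_card
      intro m hm
      rw [Set.Finite.mem_toFinset]
      exact (Finset.mem_filter.mp hm).2
    set C := (hfin.toFinset.card : ℝ) with hC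
    obtain ⟨n, hn⟩ := exists_nat_gt (max (8 * (L - 7 * c / 8) * C / c) (max N 1 : ℕ))
    have hn2 : max N 1 ≤ n := by
      have : ((max N 1 : ℕ) : ℝ) < n := lt_of_le_of_lt (le_max_right _ _) hn
      exact_mod_cast this.le
    have h1 := hTlow n hn2
    have h2 := key n n le_rfl
    have h3 : (count n : ℝ) ≤ C := by rw [hC]; exact_mod_cast hub n
    have h4 : 8 * (L - 7 * c / 8) * C / c < n := lt_of_le_of_lt (le_max_left _ _) hn
    have h5 : 8 * (L - 7 * c / 8) * C < c * n := by
      rw [div_lt_iff₀ hc] at h4; linarith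
    nlinarith
end

section
/- Measure of the unstable hyperbolic-time block: Let (X, μ) be a probability space, f : X → X an invertible bimeasurable measure-preserving map with μ ergodic, and φ : X → ℝ a measurable function with φ(z) ≥ −L̄ for all z ∈ X. Let c > 0 with L̄ ≥ c and suppose that for μ-almost every x one has limsup_{n→∞} S_nφ(x)/n < −c. Then μ({x ∈ X : S_kφ(f^{−k}(x)) ≤ −(7c/8)·k for every k ≥ 1}) ≥ c/(8L̄ − 7c). -/
/-!
Put `a_n(x) = −S_nφ(x) − (7c/8)n`. Its increments are at most `L̄ − 7c/8`, and for a.e. `x`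
eventually `a_N(x) ≥ cN/8`, so by Pliss' lemma at least `θN` of the times `n ≤ N` are record
times of `a(x)` (`a_m ≤ a_n` for all `m < n`), where `θ = (c/8)/(L̄ − 7c/8) = c/(8L̄ − 7c)`.
At a record time `n`, every `k ≤ n` is a `7c/8`-hyperbolic time for `f^{−k}(f^n x)`. Hence the
orbit of a.e. `x` visits each finite-horizon block `B_j` with lower frequency at least `θ`;
Fatou's lemma and the invariance of `μ` give `μ(B_j) ≥ θ`, and the block is `⋂ j, B_j`.
-/

open MeasureTheory Filter Finset Topology
open scoped ENNReal

section

open scoped Classical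

section Records

variable {a : ℕ → ℝ} {A : ℝ}

noncomputable def recordTimes (a : ℕ → ℝ) (N : ℕ) : Finset ℕ :=
  {n ∈ Icc 1 N | ∀ m < n, a m ≤ a n}

lemma mem_recordTimes {n N : ℕ} :
    n ∈ recordTimes a N ↔ (1 ≤ n ∧ n ≤ N) ∧ ∀ m < n, a m ≤ a n := by
  rw [recordTimes, mem_filter, mem_Icc]

lemma recordTimes_mono : Monotone (recordTimes a) := fun _ _ hMN _ hn => by
  rw [mem_recordTimes] at hn ⊢
  exact ⟨⟨hn.1.1, hn.1.2.trans hMN⟩, hn.2⟩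

lemma card_recordTimes_succ {N : ℕ} (h : ∀ m < N + 1, a m ≤ a (N + 1)) :
    #(recordTimes a (N + 1)) = #(recordTimes a N) + 1 := by
  have hinsert : recordTimes a (N + 1) = insert (N + 1) (recordTimes a N) := by
    ext n
    simp only [mem_insert, mem_recordTimes]
    constructor
    · rintro ⟨hn, hrec⟩
      rcases hn.2.lt_or_eq with hlt | rfl
      exacts [Or.inr ⟨⟨hn.1, Nat.lt_succ_iff.mp hlt⟩, hrec⟩, Or.inl rfl]
    · rintro (rfl | ⟨hn, hrec⟩)
      exacts [⟨⟨N.succ_pos, le_rfl⟩, h⟩, ⟨⟨hn.1, hn.2.trans N.le_succ⟩, hrec⟩]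
  rw [hinsert, card_insert_of_notMem fun hN => by have := (mem_recordTimes.mp hN).1.2; omega]

/-- Pliss' lemma: the running maximum of `a` only increases at record times, and then by at
most `A`. -/
theorem le_add_mul_card_recordTimes (hA : 0 ≤ A) (hstep : ∀ n, a (n + 1) ≤ a n + A) (N : ℕ) :
    ∀ k ≤ N, a k ≤ a 0 + A * #(recordTimes a N) := by
  induction N with
  | zero =>
    intro k hk
    obtain rfl := Nat.le_zero.mp hk
    simp [recordTimes]
  | succ N ih =>
    have hmono : a 0 + A * #(recordTimes a N) ≤ a 0 + A * #(recordTimes a (N + 1)) := by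
      gcongr
      exact recordTimes_mono N.le_succ
    intro k hk
    rcases hk.lt_or_eq with hk | rfl
    · exact (ih k (Nat.lt_succ_iff.mp hk)).trans hmono
    by_cases hrec : ∀ m < N + 1, a m ≤ a (N + 1)
    · rw [card_recordTimes_succ hrec]
      push_cast
      linarith [hstep N, ih N le_rfl]
    · push Not at hrec
      obtain ⟨m, hm, hlt⟩ := hrec
      linarith [ih m (Nat.lt_succ_iff.mp hm)]

end Records

/-- In `ℝ`, the `limsup` of a sequence unbounded above is the junk value `0`; this is why
`a ≤ 0` is assumed. -/
theorem Real.eventually_lt_mul_of_limsup_div_lt {u : ℕ → ℝ} {a : ℝ} (ha : a ≤ 0)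
    (h : limsup (fun n : ℕ => u n / n) atTop < a) : ∀ᶠ n : ℕ in atTop, u n < a * n := by
  have hbdd : IsBoundedUnder (· ≤ ·) atTop fun n : ℕ => u n / n := by
    by_contra hb
    rw [Real.limsup_of_not_isBoundedUnder hb] at h
    linarith
  filter_upwards [eventually_lt_of_limsup_lt h hbdd, eventually_gt_atTop 0] with n hn hn0
  exact (div_lt_iff₀ (by exact_mod_cast hn0)).mp hn

theorem ENNReal.ofReal_le_liminf_natCast_div {u : ℕ → ℕ} {θ C : ℝ}
    (h : ∀ᶠ N : ℕ in atTop, θ * N - C ≤ u N) :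
    ENNReal.ofReal θ ≤ liminf (fun N : ℕ => (u N : ℝ≥0∞) / N) atTop := by
  have hlim : Tendsto (fun N : ℕ => ENNReal.ofReal (θ - C / N)) atTop (𝓝 (ENNReal.ofReal θ)) :=
    ENNReal.tendsto_ofReal <| by
      simpa using tendsto_const_nhds.sub (tendsto_const_div_atTop_nhds_zero_nat C)
  rw [← hlim.liminf_eq]
  refine liminf_le_liminf ?_
  filter_upwards [h, eventually_gt_atTop 0] with N hN hN0
  have hNpos : (0 : ℝ) < N := by exact_mod_cast hN0
  rw [← ENNReal.ofReal_natCast (u N), ← ENNReal.ofReal_natCast N,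
    ← ENNReal.ofReal_div_of_pos hNpos]
  refine ENNReal.ofReal_le_ofReal ?_
  rw [le_div_iff₀ hNpos, sub_mul, div_mul_cancel₀ _ hNpos.ne']
  exact hN

variable {X : Type*}

section BirkhoffMargin

variable {φ : X → ℝ} {c L : ℝ}

def birkhoffMargin (f : X → X) (φ : X → ℝ) (c : ℝ) (x : X) (n : ℕ) : ℝ :=
  -birkhoffSum f φ n x - c * n

theorem birkhoffMargin_succ_le (f : X → X) (hφ : ∀ z, -L ≤ φ z) (x : X) (n : ℕ) :
    birkhoffMargin f φ c x (n + 1) ≤ birkhoffMargin f φ c x n + (L - c) := by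
  simp only [birkhoffMargin, birkhoffSum_succ]
  push_cast
  linarith [hφ (f^[n] x)]

end BirkhoffMargin

lemma natCast_card_visits (T : X → X) (E : Set X) (s : Finset ℕ) (x : X) :
    (#{n ∈ s | T^[n] x ∈ E} : ℝ≥0∞) = ∑ n ∈ s, (T^[n] ⁻¹' E).indicator 1 x := by
  simp [Set.indicator_apply]

variable [MeasurableSpace X]

section VisitFrequency

variable {μ : Measure X} {T : X → X} {E : Set X}

lemma MeasureTheory.MeasurePreserving.lintegral_card_visits (hT : MeasurePreserving T μ μ)
    (hE : MeasurableSet E) (N : ℕ) :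
    ∫⁻ x, (#{n ∈ Icc 1 N | T^[n] x ∈ E} : ℝ≥0∞) ∂μ = N * μ E := by
  have hpre n : MeasurableSet (T^[n] ⁻¹' E) := hT.measurable.iterate n hE
  simp_rw [natCast_card_visits]
  rw [lintegral_finsetSum _ fun n _ => measurable_one.indicator (hpre n)]
  simp_rw [lintegral_indicator_one (hpre _), (hT.iterate _).measure_preimage hE.nullMeasurableSet]
  simp

/-- Fatou's lemma, applied to the visit frequencies, whose integrals all equal `μ E`. -/
theorem MeasureTheory.MeasurePreserving.le_measure_of_le_liminf_visitFrequency
    [IsProbabilityMeasure μ] (hT : MeasurePreserving T μ μ) (hE : MeasurableSet E) {θ : ℝ≥0∞}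
    (h : ∀ᵐ x ∂μ, θ ≤ liminf (fun N : ℕ => (#{n ∈ Icc 1 N | T^[n] x ∈ E} : ℝ≥0∞) / N) atTop) :
    θ ≤ μ E := by
  have hmeas N : Measurable fun x => (#{n ∈ Icc 1 N | T^[n] x ∈ E} : ℝ≥0∞) := by
    simp_rw [natCast_card_visits]
    exact Finset.measurable_sum _ fun n _ => measurable_one.indicator (hT.measurable.iterate n hE)
  have hint : ∀ᶠ N : ℕ in atTop,
      ∫⁻ x, (#{n ∈ Icc 1 N | T^[n] x ∈ E} : ℝ≥0∞) / N ∂μ = μ E := by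
    filter_upwards [eventually_gt_atTop 0] with N hN
    simp_rw [div_eq_mul_inv]
    rw [lintegral_mul_const _ (hmeas N), hT.lintegral_card_visits hE, mul_comm, ← mul_assoc,
      ENNReal.inv_mul_cancel (by exact_mod_cast hN.ne') (ENNReal.natCast_ne_top N), one_mul]
  calc θ = ∫⁻ _, θ ∂μ := by simp
    _ ≤ ∫⁻ x, liminf (fun N : ℕ => (#{n ∈ Icc 1 N | T^[n] x ∈ E} : ℝ≥0∞) / N) atTop ∂μ :=
      lintegral_mono_ae h
    _ ≤ liminf (fun N : ℕ => ∫⁻ x, (#{n ∈ Icc 1 N | T^[n] x ∈ E} : ℝ≥0∞) / N ∂μ) atTop :=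
      lintegral_liminf_le fun N => (hmeas N).div_const _
    _ = μ E := by rw [liminf_congr hint, liminf_const]

end VisitFrequency

section HyperbolicBlocks

variable {φ : X → ℝ} {c L : ℝ}

/-- The block of `c`-hyperbolic times up to horizon `n`: every `k ≤ n` is a `c`-hyperbolic
time for `f^{-k} y`. -/
def backwardHyperbolicSet (f : X ≃ᵐ X) (φ : X → ℝ) (c : ℝ) (n : ℕ) : Set X :=
  {y | ∀ k, 1 ≤ k → k ≤ n → birkhoffSum f φ k (f.symm^[k] y) ≤ -c * k}

theorem measurable_birkhoffSum {f : X → X} (hf : Measurable f) (hφ : Measurable φ) (n : ℕ) :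
    Measurable (birkhoffSum f φ n) :=
  Finset.measurable_sum _ fun i _ => hφ.comp (hf.iterate i)

theorem measurableSet_backwardHyperbolicSet (f : X ≃ᵐ X) (hφ : Measurable φ) (c : ℝ) (n : ℕ) :
    MeasurableSet (backwardHyperbolicSet f φ c n) := by
  simp only [backwardHyperbolicSet, Set.ofPred_forall]
  exact .iInter fun k => .iInter fun _ => .iInter fun _ => measurableSet_le
    ((measurable_birkhoffSum f.measurable hφ k).comp (f.symm.measurable.iterate k))
    measurable_const

theorem antitone_backwardHyperbolicSet (f : X ≃ᵐ X) (φ : X → ℝ) (c : ℝ) :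
    Antitone (backwardHyperbolicSet f φ c) :=
  fun _ _ hmn _ hy k hk hkn => hy k hk (hkn.trans hmn)

theorem iInter_backwardHyperbolicSet (f : X ≃ᵐ X) (φ : X → ℝ) (c : ℝ) :
    ⋂ n, backwardHyperbolicSet f φ c n =
      {y | ∀ k, 1 ≤ k → birkhoffSum f φ k (f.symm^[k] y) ≤ -c * k} := by
  ext y
  simp only [backwardHyperbolicSet, Set.mem_iInter, Set.mem_ofPred_eq]
  exact ⟨fun h k hk => h k k hk le_rfl, fun h _ k hk _ => h k hk⟩

theorem MeasurableEquiv.iterate_symm_iterate_of_le (f : X ≃ᵐ X) {k n : ℕ} (hkn : k ≤ n)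
    (x : X) : f.symm^[k] (f^[n] x) = f^[n - k] x := by
  obtain ⟨j, rfl⟩ := Nat.exists_eq_add_of_le hkn
  rw [Nat.add_sub_cancel_left, Function.iterate_add_apply]
  exact Function.LeftInverse.iterate f.symm_apply_apply k _

theorem iterate_mem_backwardHyperbolicSet (f : X ≃ᵐ X) {x : X} {n : ℕ}
    (hrec : ∀ m < n, birkhoffMargin f φ c x m ≤ birkhoffMargin f φ c x n) :
    f^[n] x ∈ backwardHyperbolicSet f φ c n := by
  intro k hk hkn
  rw [f.iterate_symm_iterate_of_le hkn]
  have hsplit := birkhoffSum_add f φ (n - k) k x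
  have hmargin := hrec (n - k) (by omega)
  rw [Nat.sub_add_cancel hkn] at hsplit
  simp only [birkhoffMargin, Nat.cast_sub hkn] at hmargin
  linarith

theorem card_recordTimes_le_card_visits_add (f : X ≃ᵐ X) (x : X) (n₀ N : ℕ) :
    #(recordTimes (birkhoffMargin f φ c x) N) ≤
      #{n ∈ Icc 1 N | f^[n] x ∈ backwardHyperbolicSet f φ c n₀} + n₀ := by
  calc #(recordTimes (birkhoffMargin f φ c x) N)
      ≤ #({n ∈ Icc 1 N | f^[n] x ∈ backwardHyperbolicSet f φ c n₀} ∪ range n₀) := by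
        refine card_le_card fun n hn => ?_
        obtain ⟨hnN, hrec⟩ := mem_recordTimes.mp hn
        rcases lt_or_ge n n₀ with hn₀ | hn₀
        · exact mem_union_right _ (mem_range.mpr hn₀)
        · refine mem_union_left _ (mem_filter.mpr ⟨mem_Icc.mpr hnN, ?_⟩)
          exact antitone_backwardHyperbolicSet f φ c hn₀ (iterate_mem_backwardHyperbolicSet f hrec)
    _ ≤ _ := (card_union_le _ _).trans_eq (by rw [card_range])

theorem eventually_le_card_visits_backwardHyperbolicSet (f : X ≃ᵐ X) (hφ : ∀ z, -L ≤ φ z)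
    {c' : ℝ} (hc' : c' < c) (hcL : c ≤ L) {x : X}
    (hx : ∀ᶠ N : ℕ in atTop, birkhoffSum f φ N x < -c * N) (n₀ : ℕ) :
    ∀ᶠ N : ℕ in atTop, (c - c') / (L - c') * N - n₀ ≤
      #{n ∈ Icc 1 N | f^[n] x ∈ backwardHyperbolicSet f φ c' n₀} := by
  have hLc' : 0 < L - c' := by linarith
  filter_upwards [hx] with N hN
  have hpliss := le_add_mul_card_recordTimes hLc'.le (birkhoffMargin_succ_le f hφ x) N N le_rfl
  have hcount : (#(recordTimes (birkhoffMargin f φ c' x) N) : ℝ) ≤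
      #{n ∈ Icc 1 N | f^[n] x ∈ backwardHyperbolicSet f φ c' n₀} + n₀ := by
    exact_mod_cast card_recordTimes_le_card_visits_add f x n₀ N
  simp only [birkhoffMargin, birkhoffSum_zero, CharP.cast_eq_zero] at hpliss
  rw [sub_le_iff_le_add, div_mul_eq_mul_div, div_le_iff₀ hLc']
  linarith [mul_le_mul_of_nonneg_left hcount hLc'.le]

end HyperbolicBlocks

end

/-- **Measure of the unstable hyperbolic-time block.** Let `(X, μ)` be a probability
space, `f` an invertible bimeasurable measure-preserving map with `μ` ergodic, and `φ`
measurable with `φ ≥ −L̄`. Let `L̄ ≥ c > 0` and suppose `limsup_n S_nφ(x)/n < −c` for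
`μ`-a.e. `x`. Then the set of points `x` such that
`S_kφ(f^{−k}(x)) ≤ −(7c/8)·k` for every `k ≥ 1` has `μ`-measure at least
`c/(8L̄ − 7c)`. -/
theorem unstable_hyperbolic_block_measure {X : Type*} [MeasurableSpace X]
    (μ : Measure X) [IsProbabilityMeasure μ]
    (f : X ≃ᵐ X) (herg : Ergodic (⇑f) μ)
    (φ : X → ℝ) (hφm : Measurable φ) (L : ℝ) (hφ : ∀ z, -L ≤ φ z)
    (c : ℝ) (hc : 0 < c) (hcL : c ≤ L)
    (hae : ∀ᵐ x ∂μ,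
      limsup (fun n : ℕ => birkhoffSum (⇑f) φ n x / n) atTop < -c) :
    ENNReal.ofReal (c / (8 * L - 7 * c)) ≤
      μ {x | ∀ k : ℕ, 1 ≤ k →
        birkhoffSum (⇑f) φ k ((⇑f.symm)^[k] x) ≤ -(7 * c / 8) * k} := by
  have hθ : c / (8 * L - 7 * c) = (c - 7 * c / 8) / (L - 7 * c / 8) := by
    rw [← div_div_div_cancel_right₀ (by norm_num : (8 : ℝ) ≠ 0)]
    ring_nf
  have hblock n₀ : ENNReal.ofReal (c / (8 * L - 7 * c)) ≤
      μ (backwardHyperbolicSet f φ (7 * c / 8) n₀) := by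
    refine herg.toMeasurePreserving.le_measure_of_le_liminf_visitFrequency
      (measurableSet_backwardHyperbolicSet f hφm _ n₀) ?_
    filter_upwards [hae] with x hx
    rw [hθ]
    exact ENNReal.ofReal_le_liminf_natCast_div <|
      eventually_le_card_visits_backwardHyperbolicSet f hφ (by linarith) hcL
        (Real.eventually_lt_mul_of_limsup_div_lt (by linarith) hx) n₀
  rw [← iInter_backwardHyperbolicSet, (antitone_backwardHyperbolicSet f φ _).measure_iInter
    (fun n => (measurableSet_backwardHyperbolicSet f hφm _ n).nullMeasurableSet)
    ⟨0, measure_ne_top μ _⟩]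
  exact le_iInf hblock
end

section
/- Ergodic decomposition for powers: Let X be a measurable space, f : X → X a measurable map, μ an f-invariant ergodic probability measure, and N ≥ 1 an integer. Then there exist an integer k dividing N and a probability measure ν on X such that ν is f^k-invariant, ν is invariant and ergodic for f^N, and μ = (1/k)·Σ_{i=0}^{k−1} (f^i)_*ν. -/
open MeasureTheory
open scoped ENNReal

/-! An `f^[N]`-invariant set `s` of positive measure has `μ s ≥ 1/N`: the average of the first
`N` pushforwards of `μ.restrict s` is an `f`-invariant measure absolutely continuous with respect
to the ergodic measure `μ`, hence equal to `(N * μ s) • μ`, and it dominates `μ.restrict s`.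
So the invariant sets of positive measure have an infimum of measures `m > 0`, and one of measure
`< 2 m` cannot be split into two invariant pieces of positive measure: the normalised restriction
of `μ` to it is `f^[N]`-ergodic. Averaging its first `N` pushforwards gives, by the same argument,
exactly `μ`, so `k = N` works. -/

theorem ENNReal.exists_mem_lt_two_mul {S : Set ℝ≥0∞} (h0 : sInf S ≠ 0) (htop : sInf S ≠ ∞) :
    ∃ a ∈ S, ∀ b ∈ S, a < 2 * b := by
  obtain ⟨a, ha, hlt⟩ := sInf_lt_iff.1 (ENNReal.lt_add_right htop h0)
  refine ⟨a, ha, fun b hb => hlt.trans_le ?_⟩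
  rw [two_mul]
  exact add_le_add (sInf_le hb) (sInf_le hb)

namespace MeasureTheory

variable {X : Type*} [MeasurableSpace X] {f g : X → X} {μ ν : Measure X}

theorem MeasurePreserving.restrict_of_preimage_ae_eq (hg : MeasurePreserving g μ μ) {s : Set X}
    (hs : MeasurableSet s) (hgs : g ⁻¹' s =ᵐ[μ] s) :
    MeasurePreserving g (μ.restrict s) (μ.restrict s) := by
  simpa only [Measure.restrict_congr_set hgs] using hg.restrict_preimage hs

theorem MeasurePreserving.sum_map_iterate (hf : Measurable f) {k : ℕ}
    (hν : MeasurePreserving f^[k] ν ν) :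
    MeasurePreserving f (∑ i ∈ Finset.range k, ν.map f^[i])
      (∑ i ∈ Finset.range k, ν.map f^[i]) := by
  refine ⟨hf, ?_⟩
  have hshift : ∀ i, (ν.map f^[i]).map f = ν.map f^[i + 1] := fun i => by
    rw [Measure.map_map hf (hf.iterate i), ← Function.iterate_succ']
  rw [Measure.map_finset_sum hf.aemeasurable, Finset.sum_congr rfl fun i _ => hshift i]
  rcases k with _ | n
  · rfl
  · rw [Finset.sum_range_succ, hν.map_eq, Finset.sum_range_succ' _ n, Function.iterate_zero,
      Measure.map_id]

theorem Ergodic.sum_map_iterate_eq_smul [IsProbabilityMeasure μ] [IsFiniteMeasure ν]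
    (hμ : Ergodic f μ) {k : ℕ} (hν : MeasurePreserving f^[k] ν ν) (hνμ : ν ≪ μ) :
    ∑ i ∈ Finset.range k, ν.map f^[i] = (k * ν Set.univ) • μ := by
  have hiter : ∀ i, MeasurePreserving f^[i] μ μ := hμ.toMeasurePreserving.iterate
  have hac : ∑ i ∈ Finset.range k, ν.map f^[i] ≪ μ :=
    Finset.sum_induction _ (· ≪ μ) (fun _ _ => .add_left) (Measure.AbsolutelyContinuous.zero μ)
      fun i _ => (hiter i).map_eq ▸ hνμ.map (hiter i).measurable
  obtain ⟨c, hc⟩ := hμ.eq_smul_of_absolutelyContinuous (hν.sum_map_iterate hμ.measurable) hac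
  have huniv := congrArg (· Set.univ) hc
  simp only [Measure.finsetSum_apply, Measure.map_apply (hiter _).measurable MeasurableSet.univ,
    Set.preimage_univ, Finset.sum_const, Finset.card_range, nsmul_eq_mul, Measure.smul_apply,
    measure_univ, smul_eq_mul, mul_one] at huniv
  rw [hc, huniv]

theorem Ergodic.inv_le_measure_of_preimage_iterate_ae_eq [IsProbabilityMeasure μ]
    (hμ : Ergodic f μ) {n : ℕ} (hn : n ≠ 0) {s : Set X} (hs : MeasurableSet s)
    (hns : f^[n] ⁻¹' s =ᵐ[μ] s) (hs0 : μ s ≠ 0) : (n : ℝ≥0∞)⁻¹ ≤ μ s := by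
  have hrestr := (hμ.toMeasurePreserving.iterate n).restrict_of_preimage_ae_eq hs hns
  have hsum := hμ.sum_map_iterate_eq_smul hrestr Measure.restrict_le_self.absolutelyContinuous
  have hle : μ s * 1 ≤ (n * μ s) * μ s := calc
    μ s * 1 = (μ.restrict s).map f^[0] s := by simp [Measure.restrict_apply hs]
    _ ≤ (∑ i ∈ Finset.range n, (μ.restrict s).map f^[i]) s := by
      rw [Measure.finsetSum_apply]
      exact Finset.single_le_sum_of_canonicallyOrdered (f := fun i => (μ.restrict s).map f^[i] s)
        (Finset.mem_range.2 (Nat.pos_of_ne_zero hn))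
    _ = (n * μ s) * μ s := by simp [hsum]
  rw [mul_comm _ (μ s), ENNReal.mul_le_mul_iff_right hs0 (measure_ne_top μ s)] at hle
  exact (ENNReal.inv_le_iff_le_mul (fun _ => Nat.cast_ne_zero.2 hn) (by simp)).2 hle

theorem MeasurePreserving.ergodic_restrict_of_measure_lt_two_mul (hg : MeasurePreserving g μ μ)
    {A : Set X} (hA : MeasurableSet A) (hgA : g ⁻¹' A =ᵐ[μ] A)
    (hmin : ∀ t, MeasurableSet t → g ⁻¹' t =ᵐ[μ] t → μ t ≠ 0 → μ A < 2 * μ t) :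
    Ergodic g (μ.restrict A) := by
  refine ⟨hg.restrict_of_preimage_ae_eq hA hgA, ⟨fun s hs hgs => ?_⟩⟩
  have hsplit : μ (A ∩ s) = 0 ∨ μ (A \ s) = 0 := by
    by_contra! hpos
    have hinter : g ⁻¹' (A ∩ s) =ᵐ[μ] (A ∩ s : Set X) := by
      rw [Set.preimage_inter, hgs]
      exact hgA.inter (Filter.EventuallyEq.refl _ s)
    have hdiff : g ⁻¹' (A \ s) =ᵐ[μ] (A \ s : Set X) := by
      rw [Set.preimage_sdiff, hgs]
      exact hgA.diff (Filter.EventuallyEq.refl _ s)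
    have := ENNReal.add_lt_add (hmin _ (hA.inter hs) hinter hpos.1)
      (hmin _ (hA.diff hs) hdiff hpos.2)
    rw [← mul_add, measure_inter_add_sdiff A hs, two_mul] at this
    exact lt_irrefl _ this
  rw [Filter.eventuallyConst_set', ae_eq_empty, ae_eq_univ, Measure.restrict_apply hs,
    Measure.restrict_apply hs.compl, Set.inter_comm, Set.inter_comm sᶜ, ← Set.sdiff_eq]
  exact hsplit

theorem MeasurePreserving.exists_ergodic_restrict [IsFiniteMeasure μ] [NeZero μ]
    (hg : MeasurePreserving g μ μ) {c : ℝ≥0∞} (hc : c ≠ 0)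
    (hbound : ∀ s, MeasurableSet s → g ⁻¹' s =ᵐ[μ] s → μ s ≠ 0 → c ≤ μ s) :
    ∃ A, MeasurableSet A ∧ μ A ≠ 0 ∧ Ergodic g (μ.restrict A) := by
  set I := {s | MeasurableSet s ∧ g ⁻¹' s =ᵐ[μ] s ∧ μ s ≠ 0}
  have huniv : Set.univ ∈ I := ⟨.univ, by simp, NeZero.ne _⟩
  have h0 : sInf (μ '' I) ≠ 0 :=
    ne_bot_of_le_ne_bot hc <|
      le_sInf (Set.forall_mem_image.2 fun s hs => hbound s hs.1 hs.2.1 hs.2.2)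
  have htop : sInf (μ '' I) ≠ ∞ :=
    ne_top_of_le_ne_top (measure_ne_top μ _) (sInf_le (Set.mem_image_of_mem μ huniv))
  obtain ⟨_, ⟨A, ⟨hA, hgA, hA0⟩, rfl⟩, hmin⟩ := ENNReal.exists_mem_lt_two_mul h0 htop
  refine ⟨A, hA, hA0, hg.ergodic_restrict_of_measure_lt_two_mul hA hgA fun t ht hgt ht0 => ?_⟩
  exact hmin _ (Set.mem_image_of_mem μ ⟨ht, hgt, ht0⟩)

end MeasureTheory

theorem ergodic_decomposition_for_powers_general {X : Type*} [MeasurableSpace X]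
    (f : X → X)
    (μ : Measure X) [IsProbabilityMeasure μ] (herg : Ergodic f μ)
    (N : ℕ) (hN : 1 ≤ N) :
    ∃ (k : ℕ) (ν : Measure X), k ∣ N ∧ IsProbabilityMeasure ν ∧
      MeasurePreserving (f^[k]) ν ν ∧
      Ergodic (f^[N]) ν ∧
      μ = (k : ℝ≥0∞)⁻¹ • ∑ i ∈ Finset.range k, Measure.map (f^[i]) ν := by
  have hN0 : N ≠ 0 := Nat.one_le_iff_ne_zero.1 hN
  obtain ⟨A, hA, hA0, hAerg⟩ := (herg.toMeasurePreserving.iterate N).exists_ergodic_restrict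
    (ENNReal.inv_ne_zero.2 (ENNReal.natCast_ne_top N))
    fun s hs hNs hs0 => herg.inv_le_measure_of_preimage_iterate_ae_eq hN0 hs hNs hs0
  set ν := (μ A)⁻¹ • μ.restrict A
  have hν : IsProbabilityMeasure ν := ⟨by
    simp [ν, Measure.smul_apply, ENNReal.inv_mul_cancel hA0 (measure_ne_top μ A)]⟩
  have hνerg : Ergodic f^[N] ν := hAerg.smul_measure _
  refine ⟨N, ν, dvd_rfl, hν, hνerg.toMeasurePreserving, hνerg, ?_⟩
  rw [herg.sum_map_iterate_eq_smul hνerg.toMeasurePreserving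
      (Measure.smul_absolutelyContinuous.trans Measure.restrict_le_self.absolutelyContinuous),
    measure_univ, mul_one, smul_smul, ENNReal.inv_mul_cancel (Nat.cast_ne_zero.2 hN0)
      (ENNReal.natCast_ne_top N), one_smul]

/-- **Ergodic decomposition for powers.** Let `f` be a measurable map, `μ` an
`f`-invariant ergodic probability measure, and `N ≥ 1`. Then there exist `k ∣ N` and a
probability measure `ν` which is `f^k`-invariant, invariant and ergodic for `f^N`, and
such that `μ = (1/k)·Σ_{i=0}^{k−1} (f^i)_* ν`. -/
theorem ergodic_decomposition_for_powers {X : Type*} [MeasurableSpace X]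
    (f : X → X) (hf : Measurable f)
    (μ : Measure X) [IsProbabilityMeasure μ] (herg : Ergodic f μ)
    (N : ℕ) (hN : 1 ≤ N) :
    ∃ (k : ℕ) (ν : Measure X), k ∣ N ∧ IsProbabilityMeasure ν ∧
      MeasurePreserving (f^[k]) ν ν ∧
      Ergodic (f^[N]) ν ∧
      μ = (k : ℝ≥0∞)⁻¹ • ∑ i ∈ Finset.range k, Measure.map (f^[i]) ν :=
  ergodic_decomposition_for_powers_general f μ herg N hN
end

section
/- Pliss times below a hyperbolic time: Let X be a set, f : X → X a map, φ : X → ℝ a function with φ(z) ≥ −L̄ for all z ∈ X, and let a, c₁ be reals with L̄ ≥ a > c₁ > 0. If n is an e^{−a}-hyperbolic time for x, then there exist an integer ℓ ≥ θ·n, with θ = (a − c₁)/(L̄ − c₁), and integers 1 ≤ m₁ < ⋯ < m_ℓ ≤ n such that each m_i is an e^{−c₁}-hyperbolic time for x. -/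
/-- **Pliss times below a hyperbolic time.** If `φ ≥ −L̄`, `L̄ ≥ a > c₁ > 0` and `n` is an
`e^{−a}`-hyperbolic time for `x`, then there exist `ℓ ≥ θ·n` with
`θ = (a − c₁)/(L̄ − c₁)` and integers `1 ≤ m₁ < ⋯ < m_ℓ ≤ n`, each of which is an
`e^{−c₁}`-hyperbolic time for `x`. -/
theorem pliss_times_below_hyperbolic_time {X : Type*} (f : X → X) (φ : X → ℝ)
    (L : ℝ) (hφ : ∀ z, -L ≤ φ z)
    (a c₁ : ℝ) (hc₁ : 0 < c₁) (h₁a : c₁ < a) (haL : a ≤ L)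
    (x : X) (n : ℕ)
    (hn : IsHyperbolicTime f φ (Real.exp (-a)) x n) :
    ∃ (ℓ : ℕ) (m : Fin ℓ → ℕ),
      (a - c₁) / (L - c₁) * n ≤ ℓ ∧
      StrictMono m ∧
      (∀ i, 1 ≤ m i ∧ m i ≤ n) ∧
      (∀ i, IsHyperbolicTime f φ (Real.exp (-c₁)) x (m i)) := by
  classical
  have hL : 0 < L - c₁ := by linarith
  set S : ℕ → ℝ := fun j => -(birkhoffSum f φ j x) - j * c₁ with hSdef
  have hS0 : S 0 = 0 := by simp [hSdef]
  have hstep : ∀ j, S (j + 1) = S j + (-φ (f^[j] x) - c₁) := by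
    intro j
    simp only [hSdef, birkhoffSum_succ]
    push_cast
    ring
  set P : ℕ → Prop := fun m => 1 ≤ m ∧ m ≤ n ∧ ∀ k < m, S k ≤ S m with hPdef
  -- Every record time is an e^{-c₁}-hyperbolic time
  have hrec : ∀ m, P m → IsHyperbolicTime f φ (Real.exp (-c₁)) x m := by
    intro m hPm
    obtain ⟨hm1, hmn, hmax⟩ := hPm
    refine ⟨hm1, fun k hk1 hk2 => ?_⟩
    have hd : birkhoffSum f φ (m - k + k) x
        = birkhoffSum f φ (m - k) x + birkhoffSum f φ k (f^[m - k] x) :=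
      birkhoffSum_add f φ (m - k) k x
    rw [Nat.sub_add_cancel hk2] at hd
    have hS : S (m - k) ≤ S m := hmax (m - k) (by omega)
    have hcast : ((m - k : ℕ) : ℝ) = (m : ℝ) - (k : ℝ) := by
      push_cast [Nat.cast_sub hk2]; ring
    have hBm : birkhoffSum f φ m x = -(S m) - m * c₁ := by simp [hSdef]
    have hBmk : birkhoffSum f φ (m - k) x = -(S (m - k)) - ((m - k : ℕ) : ℝ) * c₁ := by
      simp [hSdef]
    rw [Real.log_exp]
    have : birkhoffSum f φ k (f^[m - k] x) = S (m - k) - S m - (k : ℝ) * c₁ := by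
      have := hd
      rw [hBm, hBmk, hcast] at this
      linarith
    rw [this]
    linarith
  -- Counting: the running max of S is bounded by (#records so far) * (L - c₁)
  have key : ∀ t, t ≤ n → ∀ k ≤ t,
      S k ≤ (((Finset.range (t + 1)).filter P).card : ℝ) * (L - c₁) := by
    intro t
    induction t with
    | zero =>
        intro _ k hk
        interval_cases k
        rw [hS0]
        positivity
    | succ t ih =>
        intro ht k hk
        have ht' : t ≤ n := by omega
        have hmono : ((Finset.range (t + 1)).filter P).card
            ≤ ((Finset.range (t + 2)).filter P).card := by
          apply Finset.card_le_card
          apply Finset.filter_subset_filter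
          intro y hy
          simp only [Finset.mem_range] at hy ⊢
          omega
        have hmono' : (((Finset.range (t + 1)).filter P).card : ℝ) * (L - c₁)
            ≤ (((Finset.range (t + 2)).filter P).card : ℝ) * (L - c₁) := by
          apply mul_le_mul_of_nonneg_right _ hL.le
          exact_mod_cast hmono
        rcases Nat.lt_or_ge k (t + 1) with hk' | hk'
        · exact le_trans (ih ht' k (by omega)) hmono'
        · have hkeq : k = t + 1 := by omega
          subst hkeq
          by_cases hP : P (t + 1)
          · have hcard : ((Finset.range (t + 2)).filter P).card
                = ((Finset.range (t + 1)).filter P).card + 1 := by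
              rw [Finset.range_add_one, Finset.filter_insert, if_pos hP,
                Finset.card_insert_of_notMem]
              simp
            have h1 : S t ≤ (((Finset.range (t + 1)).filter P).card : ℝ) * (L - c₁) :=
              ih ht' t le_rfl
            have h2 : -L ≤ φ (f^[t] x) := hφ _
            rw [hcard, hstep]
            push_cast
            nlinarith
          · have hne : ∃ k < t + 1, S (t + 1) < S k := by
              by_contra hcon
              push_neg at hcon
              exact hP ⟨by omega, ht, fun k hk => hcon k hk⟩
            obtain ⟨j, hj, hjS⟩ := hne
            have := ih ht' j (by omega)
            linarith
  set T := (Finset.range (n + 1)).filter P with hT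
  have hmemT : ∀ i : Fin T.card, T.orderEmbOfFin rfl i ∈ T :=
    fun i => T.orderEmbOfFin_mem rfl i
  have hPT : ∀ i : Fin T.card, P (T.orderEmbOfFin rfl i) := by
    intro i
    exact (Finset.mem_filter.mp (hmemT i)).2
  refine ⟨T.card, T.orderEmbOfFin rfl, ?_, (T.orderEmbOfFin rfl).strictMono, ?_, ?_⟩
  · -- cardinality lower bound
    obtain ⟨hn1, hn2⟩ := hn
    have h1 := hn2 n hn1 le_rfl
    rw [Nat.sub_self, Function.iterate_zero_apply, Real.log_exp] at h1
    have hSn : (n : ℝ) * (a - c₁) ≤ S n := by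
      simp only [hSdef]
      nlinarith
    have h2 := key n le_rfl n le_rfl
    rw [div_mul_eq_mul_div, div_le_iff₀ hL]
    calc (a - c₁) * n = (n : ℝ) * (a - c₁) := by ring
      _ ≤ S n := hSn
      _ ≤ (T.card : ℝ) * (L - c₁) := h2
  · intro i
    have := hPT i
    exact ⟨this.1, this.2.1⟩
  · intro i
    exact hrec _ (hPT i)
end
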